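/- arXiv:2502.00354 — 2 statements merged into one kernel-verified Lean document; each statement's English description precedes it below -/
import Mathlib

section
/- Suppose M ≥ 2 experts each independently predict correctly with probability p ∈ (0,1), and given that exactly s experts are correct, the mixture predicts correctly with probability (1+α)s/(M+αs) for some α > 0. Then the mixture's overall probability of correct prediction, P = ∑_{s=0}^{M} (M choose s) p^s (1-p)^{M-s} · (1+α)s/(M+αs), satisfies P > p. -/
open Finset

lemma binom_mean (m : ℕ) (p : ℝ) :
    ∑ s ∈ Finset.range (m + 2),
        ((m+1).choose s : ℝ) * p ^ s * (1 - p) ^ (m + 1 - s) * s = (m + 1) * p := by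
  rw [Finset.sum_range_succ']
  simp only [Nat.cast_zero, mul_zero, add_zero]
  have h1 : ∀ t ∈ Finset.range (m + 1),
      ((m+1).choose (t+1) : ℝ) * p ^ (t+1) * (1 - p) ^ (m + 1 - (t+1)) * ((t+1 : ℕ) : ℝ)
        = ((m + 1 : ℝ) * p) * ((m.choose t : ℝ) * p ^ t * (1 - p) ^ (m - t)) := by
    intro t ht
    have hc : (m + 1) * m.choose t = (m+1).choose (t+1) * (t+1) := by
      simpa using (Nat.add_one_mul_choose_eq m t)
    have hc' : ((m : ℝ) + 1) * (m.choose t : ℝ) = ((m+1).choose (t+1) : ℝ) * ((t : ℝ) + 1) := by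
      exact_mod_cast congrArg (fun n : ℕ => (n : ℝ)) hc
    have hsub : m + 1 - (t + 1) = m - t := by omega
    rw [hsub]
    push_cast
    linear_combination (-(p ^ (t+1) * (1 - p) ^ (m - t))) * hc'
  rw [Finset.sum_congr rfl h1, ← Finset.mul_sum]
  have hone : ∑ t ∈ Finset.range (m + 1), (m.choose t : ℝ) * p ^ t * (1 - p) ^ (m - t) = 1 := by
    have h := add_pow p (1 - p) m
    simp only [add_sub_cancel, one_pow] at h
    calc ∑ t ∈ Finset.range (m + 1), (m.choose t : ℝ) * p ^ t * (1 - p) ^ (m - t)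
        = ∑ t ∈ Finset.range (m + 1), p ^ t * (1 - p) ^ (m - t) * (m.choose t : ℝ) := by
          apply Finset.sum_congr rfl; intro k hk; ring
      _ = 1 := h.symm
  rw [hone]; ring

theorem mpe_main_gt (M : ℕ) (hM : 2 ≤ M) (p α : ℝ) (hp : 0 < p) (hp1 : p < 1)
    (hα : 0 < α) :
    ∑ s ∈ Finset.range (M + 1),
        (M.choose s : ℝ) * p ^ s * (1 - p) ^ (M - s) * ((1 + α) * s / (M + α * s)) >
      p := by
  obtain ⟨m, rfl⟩ : ∃ m, M = m + 2 := ⟨M - 2, by omega⟩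
  set M := m + 2 with hMdef
  have hMpos : (0:ℝ) < M := by positivity
  have hq : 0 < 1 - p := by linarith
  have key : p = ∑ s ∈ Finset.range (M + 1),
      (M.choose s : ℝ) * p ^ s * (1 - p) ^ (M - s) * s / M := by
    rw [← Finset.sum_div]
    have h := binom_mean (m + 1) p
    have hM1 : m + 1 + 2 = M + 1 := by omega
    rw [show m + 1 + 1 = M from rfl, hM1] at h
    rw [h, show ((m+1:ℕ):ℝ) + 1 = (M:ℝ) by push_cast [hMdef]; ring]
    field_simp
  calc p = ∑ s ∈ Finset.range (M + 1),
      (M.choose s : ℝ) * p ^ s * (1 - p) ^ (M - s) * s / M := key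
    _ < ∑ s ∈ Finset.range (M + 1),
        (M.choose s : ℝ) * p ^ s * (1 - p) ^ (M - s) * ((1 + α) * s / (M + α * s)) := by
      apply Finset.sum_lt_sum
      · intro s hs
        simp only [Finset.mem_range] at hs
        have hden : (0:ℝ) < (M:ℝ) + α * s := by positivity
        have hw : (0:ℝ) ≤ (M.choose s : ℝ) * p ^ s * (1 - p) ^ (M - s) := by positivity
        rw [mul_div_assoc]
        have hsM : (s:ℝ) ≤ M := by exact_mod_cast Nat.le_of_lt_succ hs
        have hs0 : (0:ℝ) ≤ (s:ℝ) := Nat.cast_nonneg s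
        have hfrac : (s:ℝ)/M ≤ (1 + α) * s / (M + α * s) := by
          rw [div_le_div_iff₀ hMpos hden]
          nlinarith [mul_nonneg (mul_nonneg hα.le hs0) (sub_nonneg.mpr hsM)]
        exact mul_le_mul_of_nonneg_left hfrac hw
      · refine ⟨1, Finset.mem_range.mpr (by omega), ?_⟩
        have hw : (0:ℝ) < (M.choose 1 : ℝ) * p ^ 1 * (1 - p) ^ (M - 1) := by
          rw [Nat.choose_one_right]
          positivity
        have hden : (0:ℝ) < (M:ℝ) + α * (1:ℕ) := by positivity
        have hfrac : ((1:ℕ):ℝ) / M < (1 + α) * (1:ℕ) / (M + α * (1:ℕ)) := by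
          rw [div_lt_div_iff₀ hMpos hden]
          have hM2 : (2:ℝ) ≤ M := by exact_mod_cast hM
          push_cast
          nlinarith
        calc (M.choose 1 : ℝ) * p ^ 1 * (1 - p) ^ (M - 1) * ((1:ℕ):ℝ) / M
            = ((M.choose 1 : ℝ) * p ^ 1 * (1 - p) ^ (M - 1)) * (((1:ℕ):ℝ) / M) := by ring
          _ < ((M.choose 1 : ℝ) * p ^ 1 * (1 - p) ^ (M - 1)) * ((1 + α) * (1:ℕ) / (M + α * (1:ℕ))) :=
              mul_lt_mul_of_pos_left hfrac hw
          _ = (M.choose 1 : ℝ) * p ^ 1 * (1 - p) ^ (M - 1) * ((1 + α) * ((1:ℕ):ℝ) / (M + α * ((1:ℕ):ℝ))) := by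
              ring
end

section
/- Suppose M ≥ 2 experts each independently predict correctly with probability p ∈ (0,1) and the gate's conditional success probability given s correct experts is (1+α)s/(M+αs) with α > 0. Then P = ∑_{s=0}^{M} (M choose s) p^s (1-p)^{M-s} · (1+α)s/(M+αs) ≥ (1+α)p / (1 + α(p + (1-p)/M)). -/
open Finset

lemma binom_weight_sum (p q : ℝ) (h : p + q = 1) (n : ℕ) :
    ∑ t ∈ range (n + 1), (n.choose t : ℝ) * p ^ t * q ^ (n - t) = 1 := by
  rw [show (∑ t ∈ range (n+1), (n.choose t:ℝ) * p^t * q^(n-t))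
      = ∑ m ∈ range (n+1), p^m * q^(n-m) * (n.choose m:ℝ) from
    Finset.sum_congr rfl (fun t _ => by ring), ← add_pow, h, one_pow]

lemma binom_mean_s9 (p q : ℝ) (h : p + q = 1) (n : ℕ) :
    ∑ t ∈ range (n + 1), (t : ℝ) * (n.choose t : ℝ) * p ^ t * q ^ (n - t) = n * p := by
  cases n with
  | zero => simp
  | succ m =>
    rw [Finset.sum_range_succ']
    simp only [Nat.cast_zero, zero_mul, add_zero]
    have : ∑ u ∈ range (m + 1), ((u + 1 : ℕ) : ℝ) * ((m + 1).choose (u + 1) : ℝ)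
          * p ^ (u + 1) * q ^ (m + 1 - (u + 1))
        = ((m:ℝ) + 1) * p * ∑ u ∈ range (m + 1), (m.choose u : ℝ) * p ^ u * q ^ (m - u) := by
      rw [Finset.mul_sum]
      refine Finset.sum_congr rfl (fun u _ => ?_)
      have hk : ((m+1).choose (u + 1) : ℝ) * ((u:ℝ) + 1) = ((m:ℝ) + 1) * (m.choose u : ℝ) := by
        have h2 : ((m + 1) * m.choose u : ℕ) = ((m + 1).choose (u + 1) * (u + 1) : ℕ) :=
          Nat.add_one_mul_choose_eq m u
        have := congrArg (fun k : ℕ => (k : ℝ)) h2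
        push_cast at this
        linarith
      have hsub : m + 1 - (u + 1) = m - u := by omega
      rw [hsub, pow_succ]
      push_cast
      linear_combination (p ^ u * p * q ^ (m - u)) * hk
    rw [this, binom_weight_sum p q h m, mul_one]
    push_cast
    ring

theorem mpe_main_lower_bound (M : ℕ) (hM : 2 ≤ M) (p α : ℝ) (hp : 0 < p) (hp1 : p < 1)
    (hα : 0 < α) :
    ∑ s ∈ Finset.range (M + 1),
        (M.choose s : ℝ) * p ^ s * (1 - p) ^ (M - s) * ((1 + α) * s / (M + α * s)) ≥
      (1 + α) * p / (1 + α * (p + (1 - p) / M)) := by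
  set q : ℝ := 1 - p with hq
  have hpq : p + q = 1 := by rw [hq]; ring
  have hq0 : 0 < q := by rw [hq]; linarith
  obtain ⟨n, rfl⟩ : ∃ n, M = n + 1 := ⟨M - 1, by omega⟩
  set N : ℝ := (n : ℝ) + 1 with hN
  have hN1 : (1:ℝ) ≤ N := by
    have : (0:ℝ) ≤ (n:ℝ) := Nat.cast_nonneg n
    simp only [hN]; linarith
  have hN0 : 0 < N := by linarith
  set w : ℕ → ℝ := fun t => (n.choose t : ℝ) * p ^ t * q ^ (n - t) with hwdef
  set x : ℕ → ℝ := fun t => N + α * ((t:ℝ) + 1) with hxdef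
  have hwnn : ∀ t, 0 ≤ w t := by
    intro t; simp only [hwdef]; positivity
  have hxpos : ∀ t, 0 < x t := by
    intro t
    have h1 : (0:ℝ) ≤ (t:ℝ) := Nat.cast_nonneg t
    simp only [hxdef]
    nlinarith
  -- Step 1: reindex the LHS
  have step1 : ∑ s ∈ Finset.range (n + 1 + 1),
        ((n+1).choose s : ℝ) * p ^ s * q ^ (n + 1 - s) * ((1 + α) * s / (((n+1:ℕ):ℝ) + α * s))
      = (1 + α) * N * p * ∑ t ∈ range (n + 1), w t / x t := by
    rw [Finset.sum_range_succ', Finset.mul_sum]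
    simp only [Nat.cast_zero, mul_zero, zero_div, add_zero]
    refine Finset.sum_congr rfl (fun u hu => ?_)
    have hk : ((n+1).choose (u + 1) : ℝ) * ((u:ℝ) + 1) = N * (n.choose u : ℝ) := by
      have h2 : ((n + 1) * n.choose u : ℕ) = ((n + 1).choose (u + 1) * (u + 1) : ℕ) :=
        Nat.add_one_mul_choose_eq n u
      have := congrArg (fun k : ℕ => (k : ℝ)) h2
      push_cast at this
      simp only [hN]
      linarith
    have hsub : n + 1 - (u + 1) = n - u := by omega
    have hX := (hxpos u).ne'
    rw [hsub]
    have hcast : (((n+1:ℕ)):ℝ) + α * ((u+1:ℕ):ℝ) = x u := by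
      simp only [hxdef, hN]; push_cast; ring
    push_cast
    push_cast at hcast
    rw [hcast]
    simp only [hwdef]
    linear_combination ((1 + α) * p ^ u * p * q ^ (n - u) / x u) * hk
  -- weights sum to 1, mean
  have hsumw : ∑ t ∈ range (n + 1), w t = 1 := binom_weight_sum p q hpq n
  have hmean : ∑ t ∈ range (n + 1), (t:ℝ) * w t = n * p := by
    rw [show (∑ t ∈ range (n+1), (t:ℝ) * w t)
        = ∑ t ∈ range (n+1), (t:ℝ) * (n.choose t : ℝ) * p ^ t * q ^ (n - t) from
      Finset.sum_congr rfl (fun t _ => by simp only [hwdef]; ring)]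
    exact binom_mean_s9 p q hpq n
  -- E[x] = T
  set T : ℝ := N + α * ((n:ℝ) * p + 1) with hT
  have hTpos : 0 < T := by
    have : (0:ℝ) ≤ (n:ℝ) * p := by positivity
    simp only [hT]; nlinarith
  have hsumwx : ∑ t ∈ range (n + 1), w t * x t = T := by
    have : ∀ t, w t * x t = (N + α) * w t + α * ((t:ℝ) * w t) := by
      intro t; simp only [hxdef]; ring
    rw [Finset.sum_congr rfl (fun t _ => this t), Finset.sum_add_distrib,
      ← Finset.mul_sum, ← Finset.mul_sum, hsumw, hmean]
    simp only [hT]; ring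
  -- Cauchy-Schwarz
  have CS := Finset.sum_mul_sq_le_sq_mul_sq (range (n+1))
      (fun t => Real.sqrt (w t * x t)) (fun t => Real.sqrt (w t / x t))
  have h1 : ∀ t ∈ range (n+1), Real.sqrt (w t * x t) * Real.sqrt (w t / x t) = w t := by
    intro t _
    rw [← Real.sqrt_mul (by positivity)]
    have : w t * x t * (w t / x t) = w t ^ 2 := by
      field_simp [(hxpos t).ne']
    rw [this, Real.sqrt_sq (hwnn t)]
  have h2 : ∀ t ∈ range (n+1), Real.sqrt (w t * x t) ^ 2 = w t * x t := by
    intro t _; exact Real.sq_sqrt (by positivity)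
  have h3 : ∀ t ∈ range (n+1), Real.sqrt (w t / x t) ^ 2 = w t / x t := by
    intro t _; exact Real.sq_sqrt (by positivity)
  rw [Finset.sum_congr rfl h1, Finset.sum_congr rfl h2, Finset.sum_congr rfl h3,
    hsumw, hsumwx, one_pow] at CS
  set S : ℝ := ∑ t ∈ range (n + 1), w t / x t with hS
  have hSge : 1 / T ≤ S := by
    rw [div_le_iff₀ hTpos]
    nlinarith
  -- combine
  have hcoef : 0 ≤ (1 + α) * N * p := by positivity
  have hfinal : (1 + α) * N * p * (1 / T) ≤ (1 + α) * N * p * S :=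
    mul_le_mul_of_nonneg_left hSge hcoef
  have hrhs : (1 + α) * N * p * (1 / T) = (1 + α) * p / (1 + α * (p + (1 - p) / N)) := by
    have h1p : (0:ℝ) < 1 - p := by linarith
    have hdpos : 0 < 1 + α * (p + (1 - p) / N) := by
      have h2 := div_pos h1p hN0
      nlinarith
    rw [eq_div_iff hdpos.ne']
    simp only [hT, hN]
    field_simp
    ring
  have hgoal : ((n+1:ℕ):ℝ) = N := by simp [hN]
  calc (1 + α) * p / (1 + α * (p + (1 - p) / ((n+1:ℕ):ℝ)))
      = (1 + α) * N * p * (1 / T) := by rw [hgoal, ← hrhs]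
    _ ≤ (1 + α) * N * p * S := hfinal
    _ = ∑ s ∈ Finset.range (n + 1 + 1),
        ((n+1).choose s : ℝ) * p ^ s * q ^ (n + 1 - s) * ((1 + α) * s / (((n+1:ℕ):ℝ) + α * s)) := step1.symm
end
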